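/- Let p_n ∈ ℤ[z] be defined by p_0 = 0 and p_{n+1} = p_n^2 + z. For every n ≥ 1, over ℂ one has the complete factorization p_n(z) = ∏_{k | n} h_k(z), where the product runs over all positive divisors k of n. -/

import Mathlib

open Polynomial

/-- The polynomials `p n` defined by `p 0 = 0`, `p (n+1) = p n ^ 2 + X`. -/
noncomputable def P : ℕ → Polynomial ℤ
  | 0 => 0
  | n + 1 => P n ^ 2 + X

/-- The Misiurewicz–Thurston polynomials `q l n = p (l + n) - p l`. -/
noncomputable def Q (l n : ℕ) : Polynomial ℤ := P (l + n) - P l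

/-- `p n` viewed over `ℂ`. -/
noncomputable def pC (n : ℕ) : Polynomial ℂ := (P n).map (Int.castRingHom ℂ)

/-- `q l n` viewed over `ℂ`. -/
noncomputable def qC (l n : ℕ) : Polynomial ℂ := (Q l n).map (Int.castRingHom ℂ)

/-- Hyperbolic centers of order `n`: roots of `p n` that are not roots of `p k`
for any strict divisor `k` of `n`. -/
def hyp (n : ℕ) : Set ℂ :=
  {z | (pC n).eval z = 0 ∧ ∀ k : ℕ, k ∣ n → k ≠ n → (pC k).eval z ≠ 0}

/-- Misiurewicz points of type `(l, n)`. -/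
def mis (l n : ℕ) : Set ℂ :=
  {z | (qC l n).eval z = 0 ∧ (qC (l - 1) n).eval z ≠ 0 ∧
    ∀ k : ℕ, k ∣ n → k ≠ n → (qC l k).eval z ≠ 0}

/-- Gleason's polynomial `h n = ∏_{r ∈ hyp n} (X - r)`. -/
noncomputable def hPoly (n : ℕ) : Polynomial ℂ := ∏ᶠ r ∈ hyp n, (X - C r)

/-- Reduced Misiurewicz polynomial `m l n = ∏_{r ∈ mis l n} (X - r)`. -/
noncomputable def mPoly (l n : ℕ) : Polynomial ℂ := ∏ᶠ r ∈ mis l n, (X - C r)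

/-- The multiplicity `η l k = ⌊(l - 1)/k⌋ + 2`, with the conventions
`η 0 k = 1` (floor taken in `ℤ`) and `η 1 k = 2`. -/
def eta (l k : ℕ) : ℕ := if l = 0 then 1 else (l - 1) / k + 2

lemma pC_zero : pC 0 = 0 := by simp [pC, P]

lemma pC_succ (n : ℕ) : pC (n + 1) = pC n ^ 2 + X := by
  simp [pC, P, Polynomial.map_add, Polynomial.map_pow]

lemma eval_pC_succ (n : ℕ) (z : ℂ) :
    (pC (n+1)).eval z = ((pC n).eval z) ^ 2 + z := by
  simp [pC_succ]

-- monicity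

lemma P_one : P 1 = X := by simp [P]

lemma P_monic : ∀ n : ℕ, 1 ≤ n → (P n).Monic ∧ (P n).natDegree = 2 ^ (n - 1) := by
  intro n hn
  induction n with
  | zero => omega
  | succ m ih =>
    rcases Nat.eq_or_lt_of_le hn with h | h
    · constructor
      · rw [show m = 0 by omega]; simp [P_one, monic_X]
      · rw [show m = 0 by omega]; simp [P_one]
    · have hm : 1 ≤ m := by omega
      obtain ⟨hmon, hdeg⟩ := ih hm
      have hsq : (P m ^ 2).Monic := hmon.pow 2
      have hdeg2 : (P m ^ 2).natDegree = 2 ^ m := by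
        rw [hmon.natDegree_pow, hdeg, ← pow_succ']
        congr 1; omega
      have hlt : (X : Polynomial ℤ).degree < (P m ^ 2).degree := by
        rw [degree_X, degree_eq_natDegree hsq.ne_zero, hdeg2]
        exact_mod_cast Nat.one_lt_two_pow_iff.mpr (by omega)
      constructor
      · show (P m ^ 2 + X).Monic
        exact hsq.add_of_left hlt
      · show (P m ^ 2 + X).natDegree = 2 ^ m
        rw [natDegree_add_eq_left_of_degree_lt hlt]
        exact hdeg2

lemma pC_monic (n : ℕ) (hn : 1 ≤ n) : (pC n).Monic :=
  ((P_monic n hn).1).map _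

lemma pC_ne_zero (n : ℕ) (hn : 1 ≤ n) : pC n ≠ 0 :=
  (pC_monic n hn).ne_zero

lemma P_derivative (n : ℕ) (hn : 1 ≤ n) :
    ∃ g : Polynomial ℤ, derivative (P n) = 1 + 2 * g := by
  obtain ⟨m, rfl⟩ : ∃ m, n = m + 1 := ⟨n - 1, by omega⟩
  refine ⟨P m * derivative (P m), ?_⟩
  show derivative (P m ^ 2 + X) = _
  rw [derivative_add, derivative_X, derivative_pow]
  simp [Polynomial.C_eq_intCast]
  ring

lemma root_isIntegral {n : ℕ} (hn : 1 ≤ n) {z : ℂ} (hz : (pC n).eval z = 0) :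
    IsIntegral ℤ z := by
  refine ⟨P n, (P_monic n hn).1, ?_⟩
  rwa [Polynomial.eval₂_eq_eval_map, algebraMap_int_eq]

lemma half_not_integral : ¬ IsIntegral ℤ ((-1) / 2 : ℂ) := by
  intro h
  have := (isIntegral_algebraMap_iff ((algebraMap ℚ ℂ).injective)).mp
    (by convert h using 1; push_cast; norm_num : IsIntegral ℤ (algebraMap ℚ ℂ ((-1)/2)))
  obtain ⟨y, hy⟩ := IsIntegrallyClosed.isIntegral_iff.mp this
  have : ((y : ℚ)) = (-1)/2 := hy
  have h2 : ((2 * y : ℤ) : ℚ) = -1 := by push_cast [this]; ring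
  have : (2 * y : ℤ) = -1 := by exact_mod_cast h2
  omega

lemma deriv_ne_zero_of_root {n : ℕ} (hn : 1 ≤ n) {z : ℂ}
    (hz : (pC n).eval z = 0) : (derivative (pC n)).eval z ≠ 0 := by
  intro h0
  obtain ⟨g, hg⟩ := P_derivative n hn
  have hzint : IsIntegral ℤ z := root_isIntegral hn hz
  have hmap : derivative (pC n) = (derivative (P n)).map (Int.castRingHom ℂ) := by
    simp [pC, derivative_map]
  rw [hmap, hg] at h0
  simp only [Polynomial.map_add, Polynomial.map_mul, Polynomial.map_one,
    Polynomial.map_ofNat, eval_add, eval_mul, eval_one, eval_ofNat] at h0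
  have hw : ((g.map (Int.castRingHom ℂ)).eval z) = (-1) / 2 := by
    linear_combination h0 / 2
  have : IsIntegral ℤ ((g.map (Int.castRingHom ℂ)).eval z) := by
    have hmem : (Polynomial.aeval z) g ∈ Algebra.adjoin ℤ {z} :=
      Polynomial.aeval_mem_adjoin_singleton ℤ z
    have heq : (Polynomial.aeval z) g = (g.map (Int.castRingHom ℂ)).eval z := by
      rw [Polynomial.aeval_def, Polynomial.eval₂_eq_eval_map, algebraMap_int_eq]
    exact heq ▸ IsIntegral.of_mem_of_fg _ hzint.fg_adjoin_singleton _ hmem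
  rw [hw] at this
  exact half_not_integral this

lemma pC_separable (n : ℕ) (hn : 1 ≤ n) : (pC n).Separable := by
  rw [Polynomial.separable_def]
  rw [Polynomial.isCoprime_iff_aeval_ne_zero_of_isAlgClosed (k := ℂ) ℂ (pC n) (derivative (pC n))]
  intro a
  by_cases h : (pC n).eval a = 0
  · right
    simpa [Polynomial.aeval_def, Polynomial.eval₂_eq_eval_map] using
      deriv_ne_zero_of_root hn h
  · left
    simpa [Polynomial.aeval_def, Polynomial.eval₂_eq_eval_map] using h

-- the orbit sequence lemmas

lemma eval_shift {z : ℂ} {k : ℕ} (hk : (pC k).eval z = 0) (m : ℕ) :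
    (pC (m + k)).eval z = (pC m).eval z := by
  induction m with
  | zero => simpa [pC_zero] using hk
  | succ m ih =>
    have h1 : m + 1 + k = (m + k) + 1 := by omega
    rw [h1, eval_pC_succ, eval_pC_succ, ih]

lemma eval_shift_mul {z : ℂ} {k : ℕ} (hk : (pC k).eval z = 0) (q m : ℕ) :
    (pC (m + q * k)).eval z = (pC m).eval z := by
  induction q with
  | zero => simp
  | succ q ih =>
    have h1 : m + (q + 1) * k = (m + q * k) + k := by ring
    rw [h1, eval_shift hk, ih]

lemma root_of_dvd {z : ℂ} {k n : ℕ} (hkn : k ∣ n) (hk : (pC k).eval z = 0) :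
    (pC n).eval z = 0 := by
  obtain ⟨q, rfl⟩ := hkn
  have := eval_shift_mul hk q 0
  rw [show (0 : ℕ) + q * k = k * q by ring] at this
  rw [this]
  simp [pC_zero]

lemma dvd_of_root_min {z : ℂ} {k : ℕ} (hk0 : 0 < k) (hk : (pC k).eval z = 0)
    (hmin : ∀ m : ℕ, 0 < m → m < k → (pC m).eval z ≠ 0)
    {n : ℕ} (hn : (pC n).eval z = 0) : k ∣ n := by
  have h := eval_shift_mul hk (n / k) (n % k)
  rw [Nat.mod_add_div'] at h
  rw [hn] at h
  rcases Nat.eq_zero_or_pos (n % k) with h0 | h0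
  · exact Nat.dvd_of_mod_eq_zero h0
  · exact absurd h.symm (hmin _ h0 (Nat.mod_lt _ hk0))

lemma hyp_finite (k : ℕ) (hk : 1 ≤ k) : (hyp k).Finite := by
  apply Set.Finite.subset (Polynomial.finite_setOf_isRoot (pC_ne_zero k hk))
  intro z hz
  exact hz.1

noncomputable def hypF (k : ℕ) : Finset ℂ := by
  classical exact ((pC k).roots.toFinset).filter (· ∈ hyp k)

lemma mem_hypF {k : ℕ} (hk : 1 ≤ k) {z : ℂ} : z ∈ hypF k ↔ z ∈ hyp k := by
  classical
  rw [hypF]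
  simp only [Finset.mem_filter, Multiset.mem_toFinset,
    Polynomial.mem_roots (pC_ne_zero k hk)]
  constructor
  · exact fun h => h.2
  · exact fun h => ⟨h.1, h⟩

lemma coe_hypF {k : ℕ} (hk : 1 ≤ k) : (↑(hypF k) : Set ℂ) = hyp k := by
  ext z; exact mem_hypF hk

lemma hPoly_eq {k : ℕ} (hk : 1 ≤ k) :
    hPoly k = ∏ r ∈ hypF k, (X - C r) := by
  rw [hPoly, ← coe_hypF hk, finprod_mem_coe_finset]

-- minimal period

lemma exists_hyp_dvd {n : ℕ} (hn : 1 ≤ n) {z : ℂ} (hz : (pC n).eval z = 0) :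
    ∃ d : ℕ, d ∣ n ∧ z ∈ hyp d := by
  have hex : ∃ m : ℕ, 0 < m ∧ (pC m).eval z = 0 := ⟨n, by omega, hz⟩
  classical
  set d := Nat.find hex with hd
  obtain ⟨hd0, hdz⟩ := Nat.find_spec hex
  have hmin : ∀ m : ℕ, 0 < m → m < d → (pC m).eval z ≠ 0 := by
    intro m hm hmd hmz
    exact absurd (Nat.find_min' hex ⟨hm, hmz⟩) (by omega)
  refine ⟨d, dvd_of_root_min hd0 hdz hmin hz, hdz, ?_⟩
  intro k hkd hkne hkz
  have hk0 : 0 < k := by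
    rcases Nat.eq_zero_or_pos k with h | h
    · subst h; simp at hkd; omega
    · exact h
  have : k < d := Nat.lt_of_le_of_ne (Nat.le_of_dvd hd0 hkd) hkne
  exact hmin k hk0 this hkz

lemma hyp_root {k : ℕ} {z : ℂ} (hz : z ∈ hyp k) : (pC k).eval z = 0 := hz.1

lemma hyp_unique {k j : ℕ} (hk : 1 ≤ k) (_hj : 1 ≤ j) {z : ℂ}
    (hzk : z ∈ hyp k) (hzj : z ∈ hyp j) : k = j := by
  have hex : ∃ m : ℕ, 0 < m ∧ (pC m).eval z = 0 := ⟨k, by omega, hzk.1⟩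
  classical
  set d := Nat.find hex with hd
  obtain ⟨hd0, hdz⟩ := Nat.find_spec hex
  have hmin : ∀ m : ℕ, 0 < m → m < d → (pC m).eval z ≠ 0 := by
    intro m hm hmd hmz
    exact absurd (Nat.find_min' hex ⟨hm, hmz⟩) (by omega)
  have hdk : d ∣ k := dvd_of_root_min hd0 hdz hmin hzk.1
  have hdj : d ∣ j := dvd_of_root_min hd0 hdz hmin hzj.1
  have h1 : d = k := by
    by_contra hne
    exact hzk.2 d hdk hne hdz
  have h2 : d = j := by
    by_contra hne
    exact hzj.2 d hdj hne hdz
  omega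

lemma one_le_of_mem_divisors {n k : ℕ} (hk : k ∈ n.divisors) : 1 ≤ k := by
  rcases Nat.eq_zero_or_pos k with h | h
  · subst h
    rw [Nat.mem_divisors] at hk
    have := Nat.eq_zero_of_zero_dvd hk.1
    omega
  · exact h

/-- Complete factorization of `p n` over `ℂ`: `p n = ∏_{k ∣ n} h k`. -/
theorem p_factorization (n : ℕ) (hn : 1 ≤ n) :
    pC n = ∏ k ∈ n.divisors, hPoly k := by
  classical
  have hmonic := pC_monic n hn
  have hnodup : (pC n).roots.Nodup := Polynomial.nodup_roots (pC_separable n hn)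
  have h1 : pC n = ((pC n).roots.map fun r => X - C r).prod :=
    (IsAlgClosed.splits _).eq_prod_roots_of_monic hmonic
  have h2 : ∏ r ∈ (pC n).roots.toFinset, (X - C r)
      = ((pC n).roots.map fun r => X - C r).prod := by
    rw [← Multiset.toFinset_eq hnodup, Finset.prod_mk]
  have hU : (pC n).roots.toFinset = n.divisors.biUnion hypF := by
    ext z
    simp only [Multiset.mem_toFinset, Polynomial.mem_roots (pC_ne_zero n hn),
      Finset.mem_biUnion]
    constructor
    · intro hz
      obtain ⟨d, hd, hzd⟩ := exists_hyp_dvd hn hz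
      have hd1 : 1 ≤ d := by
        rcases Nat.eq_zero_or_pos d with h | h
        · exfalso; have := Nat.eq_zero_of_zero_dvd (h ▸ hd); omega
        · exact h
      exact ⟨d, Nat.mem_divisors.mpr ⟨hd, by omega⟩, (mem_hypF hd1).mpr hzd⟩
    · rintro ⟨k, hk, hzk⟩
      have hk1 := one_le_of_mem_divisors hk
      exact root_of_dvd (Nat.mem_divisors.mp hk).1 ((mem_hypF hk1).mp hzk).1
  have hdisj : ∀ k ∈ n.divisors, ∀ j ∈ n.divisors, k ≠ j →
      Disjoint (hypF k) (hypF j) := by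
    intro k hk j hj hne
    rw [Finset.disjoint_left]
    intro z hzk hzj
    exact hne (hyp_unique (one_le_of_mem_divisors hk) (one_le_of_mem_divisors hj)
      ((mem_hypF (one_le_of_mem_divisors hk)).mp hzk)
      ((mem_hypF (one_le_of_mem_divisors hj)).mp hzj))
  calc pC n = ((pC n).roots.map fun r => X - C r).prod := h1
    _ = ∏ r ∈ (pC n).roots.toFinset, (X - C r) := h2.symm
    _ = ∏ r ∈ n.divisors.biUnion hypF, (X - C r) := by rw [hU]
    _ = ∏ k ∈ n.divisors, ∏ r ∈ hypF k, (X - C r) := Finset.prod_biUnion hdisj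
    _ = ∏ k ∈ n.divisors, hPoly k := by
      refine Finset.prod_congr rfl fun k hk => ?_
      rw [hPoly_eq (one_le_of_mem_divisors hk)]
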